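/- arXiv:1409.6693 — 4 statements merged into one kernel-verified Lean document; each statement's English description precedes it below -/
import Mathlib

section
/- Let L be a field of characteristic p containing F_q, equipped with a field endomorphism τ that is F_q-linear and whose fixed field is F_q. For elements m_1,...,m_r ∈ L, the Moore matrix M = [τ^{i-1}(m_j)]_{1≤i,j≤r} has nonzero determinant if and only if m_1,...,m_r are linearly independent over F_q. -/
/-! A `K`-linear relation `∑ cⱼ mⱼ = 0` is a kernel vector of the Moore matrix, because every
power of `σ` is `K`-linear. Conversely, normalise a kernel vector `c` over `L` to `c j₀ = 1`. Then
`σ c - c` vanishes at `j₀`, and its remaining entries form a kernel vector of the Moore matrix of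
the `r - 1` elements `σ mⱼ`, `j ≠ j₀` (rows `1, …, r - 1`), so by induction it is zero. Hence every
`cⱼ` is fixed by `σ`, i.e. lies in `K`, and row `0` is a nontrivial `K`-relation among the `mⱼ`. -/

open Finset Function Matrix

def mooreMatrix {L : Type*} (σ : L → L) {r : ℕ} (m : Fin r → L) : Matrix (Fin r) (Fin r) L :=
  Matrix.of fun i j => σ^[(i : ℕ)] (m j)

theorem mooreMatrix_mulVec_algebraMap {K L : Type*} [CommSemiring K] [Semiring L] [Algebra K L]
    (σ : L →ₐ[K] L) {r : ℕ} (m : Fin r → L) (c : Fin r → K) :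
    mooreMatrix σ m *ᵥ (algebraMap K L ∘ c) = fun i : Fin r => (⇑σ)^[(i : ℕ)] (∑ j, c j • m j) := by
  ext i
  simp only [mulVec, dotProduct, mooreMatrix, of_apply, Function.comp_apply, ← AlgHom.coe_pow,
    map_sum, Algebra.smul_def, map_mul, AlgHom.commutes, Algebra.commutes]

theorem mooreMatrix_mulVec_comp_sub_apply_succ {L F : Type*} [CommRing L] [FunLike F L L]
    [RingHomClass F L L] (σ : F) {n : ℕ} (m c : Fin (n + 1) → L) (i : Fin n) :
    (mooreMatrix σ m *ᵥ (σ ∘ c - c)) i.succ =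
      σ ((mooreMatrix σ m *ᵥ c) i.castSucc) - (mooreMatrix σ m *ᵥ c) i.succ := by
  simp [mooreMatrix, mulVec, dotProduct, map_sum, mul_sub, sum_sub_distrib, iterate_succ_apply']

theorem mooreMatrix_mulVec_apply_succ_of_apply_eq_zero {L : Type*} [Semiring L] (σ : L → L) {n : ℕ}
    (m d : Fin (n + 1) → L) {j₀ : Fin (n + 1)} (hd : d j₀ = 0) (i : Fin n) :
    (mooreMatrix σ m *ᵥ d) i.succ =
      (mooreMatrix σ (σ ∘ m ∘ j₀.succAbove) *ᵥ (d ∘ j₀.succAbove)) i := by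
  simp only [mulVec, dotProduct, mooreMatrix, of_apply]
  rw [Fin.sum_univ_succAbove _ j₀, hd, mul_zero, zero_add]
  simp [iterate_succ_apply]

theorem linearIndependent_of_mooreMatrix_det_ne_zero {K L : Type*} [Field K] [CommRing L]
    [IsDomain L] [Algebra K L] (σ : L →ₐ[K] L) {r : ℕ} (m : Fin r → L)
    (h : (mooreMatrix σ m).det ≠ 0) : LinearIndependent K m := by
  by_contra hm
  obtain ⟨c, hc, j, hj⟩ := Fintype.not_linearIndependent_iff.mp hm
  have hc_ne : algebraMap K L ∘ c ≠ 0 := fun h0 =>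
    hj ((algebraMap K L).injective (by simpa using congrFun h0 j))
  have hker : mooreMatrix σ m *ᵥ (algebraMap K L ∘ c) = 0 := by
    ext i
    simp [mooreMatrix_mulVec_algebraMap, hc, iterate_map_zero]
  exact h (exists_mulVec_eq_zero_iff.mp ⟨_, hc_ne, hker⟩)

theorem eq_zero_of_mooreMatrix_mulVec_eq_zero {K L : Type*} [CommRing K] [Field L] [Algebra K L]
    (σ : L →ₐ[K] L) (hfix : ∀ x, σ x = x → ∃ c, algebraMap K L c = x) {r : ℕ}
    {m : Fin r → L} (hm : LinearIndependent K m) {c : Fin r → L}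
    (hc : mooreMatrix σ m *ᵥ c = 0) : c = 0 := by
  induction r with
  | zero => exact Subsingleton.elim _ _
  | succ n ih =>
    by_contra hne
    obtain ⟨j₀, hj₀⟩ := Function.ne_iff.mp hne
    set c' := (c j₀)⁻¹ • c
    have hc' : mooreMatrix σ m *ᵥ c' = 0 := by rw [mulVec_smul, hc, smul_zero]
    have hc'j₀ : c' j₀ = 1 := inv_mul_cancel₀ hj₀
    have hfixed : ∀ j, σ (c' j) = c' j := by
      set d := σ ∘ c' - c'
      have hdj₀ : d j₀ = 0 := by simp [d, hc'j₀]
      have hm' : LinearIndependent K (σ ∘ m ∘ j₀.succAbove) :=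
        (hm.comp _ Fin.succAbove_right_injective).map' σ.toLinearMap
          (LinearMap.ker_eq_bot.mpr σ.toRingHom.injective)
      have hd' : d ∘ j₀.succAbove = 0 := ih hm' <| funext fun i => by
        rw [← mooreMatrix_mulVec_apply_succ_of_apply_eq_zero σ m d hdj₀,
          mooreMatrix_mulVec_comp_sub_apply_succ, hc']
        simp
      intro j
      refine sub_eq_zero.mp ?_
      rcases Fin.eq_self_or_eq_succAbove j₀ j with rfl | ⟨k, rfl⟩
      · exact hdj₀
      · exact congrFun hd' k
    choose e he using fun j => hfix _ (hfixed j)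
    have hc'e : c' = algebraMap K L ∘ e := funext fun j => (he j).symm
    have hsum : ∑ j, e j • m j = 0 := by
      simpa [← hc'e, hc'] using (congrFun (mooreMatrix_mulVec_algebraMap σ m e) 0).symm
    have he₀ : e j₀ = 0 := Fintype.linearIndependent_iff.mp hm e hsum j₀
    simpa [hc'j₀, he₀] using congrFun hc'e j₀

theorem mooreMatrix_det_ne_zero_iff {K L : Type*} [Field K] [Field L] [Algebra K L]
    (σ : L →ₐ[K] L) (hfix : ∀ x, σ x = x → ∃ c, algebraMap K L c = x) {r : ℕ} (m : Fin r → L) :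
    (mooreMatrix σ m).det ≠ 0 ↔ LinearIndependent K m := by
  refine ⟨linearIndependent_of_mooreMatrix_det_ne_zero σ m, fun hm hdet => ?_⟩
  obtain ⟨c, hc0, hc⟩ := exists_mulVec_eq_zero_iff.mpr hdet
  exact hc0 (eq_zero_of_mooreMatrix_mulVec_eq_zero σ hfix hm hc)

theorem moore_determinant_criterion_general
    {Fq L : Type*} [Field Fq] [Field L]
    [Algebra Fq L]
    (τ : L →+* L)
    (hlin : ∀ (c : Fq) (x : L), τ (algebraMap Fq L c * x) = algebraMap Fq L c * τ x)
    (hfix : ∀ x : L, τ x = x ↔ ∃ c : Fq, algebraMap Fq L c = x)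
    {r : ℕ} (m : Fin r → L) :
    (Matrix.of fun i j : Fin r => (⇑τ)^[(i : ℕ)] (m j)).det ≠ 0 ↔
      LinearIndependent Fq m :=
  mooreMatrix_det_ne_zero_iff
    (AlgHom.mk' τ fun c x => by simpa only [Algebra.smul_def] using hlin c x)
    (fun x => (hfix x).mp) m

/-- **Moore determinant criterion.** Let `L` be a field of characteristic `p` containing
`𝔽_q`, with an `𝔽_q`-linear field endomorphism `τ` whose fixed field is exactly `𝔽_q`.
For `m₁, …, m_r ∈ L`, the Moore matrix `[τ^{i-1}(m_j)]` has nonzero determinant iff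
`m₁, …, m_r` are linearly independent over `𝔽_q`. -/
theorem moore_determinant_criterion
    {p : ℕ} [Fact p.Prime] {Fq L : Type*} [Field Fq] [Fintype Fq] [Field L]
    [Algebra Fq L] [CharP L p]
    (τ : L →+* L)
    (hlin : ∀ (c : Fq) (x : L), τ (algebraMap Fq L c * x) = algebraMap Fq L c * τ x)
    (hfix : ∀ x : L, τ x = x ↔ ∃ c : Fq, algebraMap Fq L c = x)
    {r : ℕ} (m : Fin r → L) :
    (Matrix.of fun i j : Fin r => (⇑τ)^[(i : ℕ)] (m j)).det ≠ 0 ↔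
      LinearIndependent Fq m :=
  moore_determinant_criterion_general τ hlin hfix m
end

section
/- The infinite product ω(t) = λ_θ ∏_{i≥0} (1 − t θ^{−q^i})^{−1} converges in the Tate algebra T over C_∞ (its reciprocal λ_θ^{−1} ∏_{i≥0} (1 − t θ^{−q^i}) converges in T), and ω satisfies the τ-difference equation τ(ω) = (t − θ) ω, where τ acts on T by the q-power Frobenius on coefficients. -/
open PowerSeries Filter

noncomputable section

variable {K : Type*} [NontriviallyNormedField K]

/-- A power series lies in the Tate algebra iff its coefficients tend to `0`. -/
def IsRestricted (f : PowerSeries K) : Prop :=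
  Tendsto (fun n => ‖coeff n f‖) atTop (nhds 0)

/-- The Gauss norm on the Tate algebra. -/
def gaussNorm (f : PowerSeries K) : ℝ := ⨆ n, ‖coeff n f‖

/-- The partial products `∏_{i < N} (1 - t θ^{-qⁱ})` of the reciprocal of the
Anderson–Thakur function. -/
def atPartialProd (θ : K) (q N : ℕ) : PowerSeries K :=
  ∏ i ∈ Finset.range N, (1 - PowerSeries.C (θ⁻¹ ^ q ^ i) * PowerSeries.X)

/-!
Over an ultrametric field, power series with `‖aₙ‖ ≤ rⁿ` are closed under products and under
inversion of series with constant coefficient `1`. Each factor `1 - t θ^{-qⁱ}` is such a series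
with `r = q⁻¹`, and consecutive partial products differ by `θ^{-q^N} t` times a series with
coefficients of norm `≤ 1`, so the partial products converge uniformly in the coefficients to a
series `P` with `‖coeff n P‖ ≤ q⁻ⁿ`; hence `P` and `P⁻¹` are restricted. Frobenius shifts the
factors, `φ(Π_N) · (1 - t/θ) = Π_{N+1}`, so in the limit `P = (1 - t/θ) · φ(P)`. Inverting and
using `λ^q = -θλ` gives `τ(ω) = -θ (1 - t/θ) ω = (t - θ) ω`.
-/

open Topology
open scoped PowerSeries.WithPiTopology

theorem norm_sub_le_of_norm_succ_sub_le {E : Type*} [SeminormedAddCommGroup E]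
    [IsUltrametricDist E] {x : ℕ → E} {δ : ℕ → ℝ} (hδ : Antitone δ) (hδ0 : ∀ n, 0 ≤ δ n)
    (hx : ∀ n, ‖x (n + 1) - x n‖ ≤ δ n) {N M : ℕ} (hNM : N ≤ M) : ‖x M - x N‖ ≤ δ N := by
  induction M, hNM using Nat.le_induction with
  | base => simpa using hδ0 N
  | succ M hNM ih =>
    rw [← sub_add_sub_cancel (x (M + 1)) (x M)]
    exact (IsUltrametricDist.norm_add_le_max _ _).trans (max_le ((hx M).trans (hδ hNM)) ih)

namespace PowerSeries

theorem map_inv {k k' : Type*} [Field k] [Field k'] (φ : k →+* k') (f : k⟦X⟧) :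
    PowerSeries.map φ f⁻¹ = (PowerSeries.map φ f)⁻¹ := by
  by_cases hf : constantCoeff f = 0
  · have hφf : constantCoeff (PowerSeries.map φ f) = 0 := by
      rw [← coeff_zero_eq_constantCoeff_apply, coeff_map, coeff_zero_eq_constantCoeff_apply, hf,
        map_zero]
    rw [inv_eq_zero.mpr hf, inv_eq_zero.mpr hφf, map_zero]
  · have hφf : constantCoeff (PowerSeries.map φ f) ≠ 0 := by
      rwa [← coeff_zero_eq_constantCoeff_apply, coeff_map, coeff_zero_eq_constantCoeff_apply,
        map_ne_zero]
    rw [eq_inv_iff_mul_eq_one hφf, ← map_mul, PowerSeries.inv_mul_cancel f hf, map_one]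

theorem WithPiTopology.continuous_map {R S : Type*} [Semiring R] [Semiring S]
    [TopologicalSpace R] [TopologicalSpace S] {φ : R →+* S} (hφ : Continuous φ) :
    Continuous (PowerSeries.map φ) :=
  continuous_iff_continuousAt.mpr fun f =>
    (WithPiTopology.tendsto_iff_coeff_tendsto _ _ _ _).mpr fun n => by
      simp only [coeff_map]
      exact (hφ.comp (WithPiTopology.continuous_coeff R n)).tendsto f

theorem eq_mul_map_of_tendsto {R : Type*} [Semiring R] [TopologicalSpace R]
    [IsTopologicalSemiring R] [T2Space R] {φ : R →+* R} (hφ : Continuous φ) {g P : R⟦X⟧}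
    {p : ℕ → R⟦X⟧} (hlim : Tendsto p atTop (𝓝 P))
    (hp : ∀ N, p (N + 1) = g * PowerSeries.map φ (p N)) :
    P = g * PowerSeries.map φ P :=
  tendsto_nhds_unique ((hlim.comp (tendsto_add_atTop_nat 1)).congr hp)
    ((((WithPiTopology.continuous_map hφ).tendsto P).comp hlim).const_mul g)

theorem exists_tendsto_of_norm_coeff_sub_le {R : Type*} [NormedRing R] [CompleteSpace R]
    {p : ℕ → R⟦X⟧} {ε : ℕ → ℝ} (hε : Tendsto ε atTop (𝓝 0))
    (hp : ∀ N M, N ≤ M → ∀ n, ‖coeff n (p M - p N)‖ ≤ ε N) :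
    ∃ P, Tendsto p atTop (𝓝 P) ∧ ∀ N n, ‖coeff n (p N - P)‖ ≤ ε N := by
  have hcauchy (n : ℕ) : CauchySeq fun N => coeff n (p N) :=
    cauchySeq_of_le_tendsto_0' ε (fun N M hNM => by
      rw [dist_comm, dist_eq_norm, ← map_sub]; exact hp N M hNM n) hε
  choose c hc using fun n => cauchySeq_tendsto_of_complete (hcauchy n)
  refine ⟨mk c, (WithPiTopology.tendsto_iff_coeff_tendsto _ _ _ _).mpr fun n => ?_,
    fun N n => ?_⟩
  · simpa only [coeff_mk] using hc n
  rw [map_sub, coeff_mk, norm_sub_rev]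
  refine le_of_tendsto ((hc n).sub_const _).norm ?_
  filter_upwards [eventually_ge_atTop N] with M hM
  rw [← map_sub]
  exact hp N M hM n

section Ultrametric

variable {F : Type*} [NormedField F] [IsUltrametricDist F]

theorem norm_coeff_mul_le_pow {f g : F⟦X⟧} {r : ℝ} (hr : 0 ≤ r)
    (hf : ∀ n, ‖coeff n f‖ ≤ r ^ n) (hg : ∀ n, ‖coeff n g‖ ≤ r ^ n) (n : ℕ) :
    ‖coeff n (f * g)‖ ≤ r ^ n := by
  rw [coeff_mul]
  refine IsUltrametricDist.norm_sum_le_of_forall_le_of_nonneg (pow_nonneg hr n) fun x hx => ?_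
  rw [← Finset.HasAntidiagonal.mem_antidiagonal.mp hx, pow_add, norm_mul]
  exact mul_le_mul (hf _) (hg _) (norm_nonneg _) (pow_nonneg hr _)

theorem norm_coeff_inv_le_pow {f : F⟦X⟧} {r : ℝ} (hr : 0 ≤ r) (h0 : constantCoeff f = 1)
    (hf : ∀ n, ‖coeff n f‖ ≤ r ^ n) (n : ℕ) : ‖coeff n f⁻¹‖ ≤ r ^ n := by
  induction n using Nat.strong_induction_on with
  | _ n ih =>
    rw [coeff_inv, h0, inv_one]
    split_ifs with hn
    · simp [hn]
    rw [neg_mul, one_mul, norm_neg]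
    refine IsUltrametricDist.norm_sum_le_of_forall_le_of_nonneg (pow_nonneg hr n) fun x hx => ?_
    split_ifs with hlt
    · rw [← Finset.HasAntidiagonal.mem_antidiagonal.mp hx, pow_add, norm_mul]
      exact mul_le_mul (hf _) (ih _ hlt) (norm_nonneg _) (pow_nonneg hr _)
    · simpa using pow_nonneg hr n

theorem norm_coeff_prod_one_sub_C_mul_X_le_pow {ι : Type*} {s : Finset ι} {a : ι → F} {r : ℝ}
    (hr : 0 ≤ r) (ha : ∀ i ∈ s, ‖a i‖ ≤ r) (n : ℕ) :
    ‖coeff n (∏ i ∈ s, (1 - C (a i) * X))‖ ≤ r ^ n := by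
  refine Finset.prod_induction _ (fun f => ∀ n, ‖coeff n f‖ ≤ r ^ n)
    (fun f g hf hg => norm_coeff_mul_le_pow hr hf hg) (fun n => ?_) (fun i hi n => ?_) n
  · rcases n with _ | n <;> simp [coeff_one, hr]
  · rcases n with _ | _ | n <;> simp [ha i hi, hr]

theorem norm_coeff_prod_range_sub_le {a : ℕ → F} {r : ℝ} (hr0 : 0 ≤ r) (hr1 : r ≤ 1)
    (ha : ∀ i, ‖a i‖ ≤ r ^ (i + 1)) {N M : ℕ} (hNM : N ≤ M) (n : ℕ) :
    ‖coeff n (∏ i ∈ Finset.range M, (1 - C (a i) * X) -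
      ∏ i ∈ Finset.range N, (1 - C (a i) * X))‖ ≤ r ^ (N + 1) := by
  simp only [map_sub]
  refine norm_sub_le_of_norm_succ_sub_le
    (x := fun M => coeff n (∏ i ∈ Finset.range M, (1 - C (a i) * X)))
    (δ := fun i => r ^ (i + 1)) (fun i j hij => pow_le_pow_of_le_one hr0 hr1 (by omega))
    (fun i => pow_nonneg hr0 _) (fun i => ?_) hNM
  have hstep : ∏ j ∈ Finset.range (i + 1), (1 - C (a j) * X) -
      ∏ j ∈ Finset.range i, (1 - C (a j) * X) =
      -(C (a i) * (X * ∏ j ∈ Finset.range i, (1 - C (a j) * X))) := by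
    rw [Finset.prod_range_succ]
    ring
  rw [← map_sub, hstep, map_neg, norm_neg, coeff_C_mul, norm_mul]
  have hX : ‖coeff n (X * ∏ j ∈ Finset.range i, (1 - C (a j) * X))‖ ≤ 1 := by
    rcases n with _ | n
    · simp
    · rw [coeff_succ_X_mul]
      exact (norm_coeff_prod_one_sub_C_mul_X_le_pow zero_le_one
        (fun j _ => (ha j).trans (pow_le_one₀ hr0 hr1)) n).trans_eq (one_pow n)
  simpa using mul_le_mul (ha i) hX (norm_nonneg _) (pow_nonneg hr0 _)

theorem exists_tendsto_prod_one_sub_C_mul_X [CompleteSpace F] {a : ℕ → F} {r : ℝ}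
    (hr0 : 0 ≤ r) (hr1 : r < 1) (ha : ∀ i, ‖a i‖ ≤ r ^ (i + 1)) :
    ∃ P, Tendsto (fun N => ∏ i ∈ Finset.range N, (1 - C (a i) * X)) atTop (𝓝 P) ∧
      (∀ N n, ‖coeff n (∏ i ∈ Finset.range N, (1 - C (a i) * X) - P)‖ ≤ r ^ (N + 1)) ∧
      constantCoeff P = 1 ∧ ∀ n, ‖coeff n P‖ ≤ r ^ n := by
  obtain ⟨P, hlim, hP⟩ := exists_tendsto_of_norm_coeff_sub_le
    ((tendsto_pow_atTop_nhds_zero_of_lt_one hr0 hr1).comp (tendsto_add_atTop_nat 1))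
    fun N M hNM => norm_coeff_prod_range_sub_le hr0 hr1.le ha hNM
  refine ⟨P, hlim, hP, ?_, fun n => ?_⟩
  · refine tendsto_nhds_unique
      (((WithPiTopology.continuous_constantCoeff F).tendsto P).comp hlim) ?_
    exact tendsto_const_nhds.congr fun N => by simp
  · refine le_of_tendsto' (((WithPiTopology.continuous_coeff F n).tendsto P).comp hlim).norm
      fun N => norm_coeff_prod_one_sub_C_mul_X_le_pow hr0 (fun i _ => ?_) n
    exact (ha i).trans (pow_le_of_le_one hr0 hr1.le i.succ_ne_zero)

end Ultrametric

theorem map_C_mul_inv_eq_of_eq_mul_map {k : Type*} [Field k] {φ : k →+* k} {θ lam : k}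
    {P : k⟦X⟧} (hθ : θ ≠ 0) (hlam : φ lam = -θ * lam)
    (hP : P = (1 - C θ⁻¹ * X) * PowerSeries.map φ P) :
    PowerSeries.map φ (C lam * P⁻¹) = (X - C θ) * (C lam * P⁻¹) := by
  have hunit : (1 - C θ⁻¹ * X)⁻¹ * (1 - C θ⁻¹ * X) = 1 :=
    PowerSeries.inv_mul_cancel _ (by simp)
  have hmapP : (PowerSeries.map φ P)⁻¹ = P⁻¹ * (1 - C θ⁻¹ * X) := by
    conv_rhs => rw [hP, PowerSeries.mul_inv_rev, mul_assoc, hunit, mul_one]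
  have hCθ : C θ * C θ⁻¹ = (1 : k⟦X⟧) := by rw [← map_mul, mul_inv_cancel₀ hθ, map_one]
  rw [map_mul, map_C, map_inv, hmapP, hlam, map_mul, map_neg]
  linear_combination (C lam * X * P⁻¹) * hCθ

end PowerSeries

theorem gaussNorm_le {f : K⟦X⟧} {B : ℝ} (h : ∀ n, ‖coeff n f‖ ≤ B) : _root_.gaussNorm f ≤ B :=
  ciSup_le h

theorem gaussNorm_nonneg (f : K⟦X⟧) : 0 ≤ _root_.gaussNorm f :=
  Real.iSup_nonneg fun _ => norm_nonneg _

theorem tendsto_gaussNorm_of_norm_coeff_le {f : ℕ → K⟦X⟧} {ε : ℕ → ℝ}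
    (hε : Tendsto ε atTop (𝓝 0)) (h : ∀ N n, ‖coeff n (f N)‖ ≤ ε N) :
    Tendsto (fun N => _root_.gaussNorm (f N)) atTop (𝓝 0) :=
  squeeze_zero (fun _ => gaussNorm_nonneg _) (fun N => gaussNorm_le (h N)) hε

theorem isRestricted_of_norm_coeff_le_pow {f : K⟦X⟧} {r : ℝ} (hr0 : 0 ≤ r) (hr1 : r < 1)
    (h : ∀ n, ‖coeff n f‖ ≤ r ^ n) : _root_.IsRestricted f :=
  squeeze_zero (fun _ => norm_nonneg _) h (tendsto_pow_atTop_nhds_zero_of_lt_one hr0 hr1)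

theorem IsRestricted.C_mul {f : K⟦X⟧} (hf : _root_.IsRestricted f) (a : K) :
    _root_.IsRestricted (C a * f) := by
  simpa only [_root_.IsRestricted, coeff_C_mul, norm_mul, mul_zero] using hf.const_mul ‖a‖

theorem atPartialProd_succ {φ : K →+* K} {q : ℕ} (hφ : ∀ x, φ x = x ^ q) (θ : K) (N : ℕ) :
    atPartialProd θ q (N + 1) =
      (1 - C θ⁻¹ * X) * PowerSeries.map φ (atPartialProd θ q N) := by
  rw [atPartialProd, Finset.prod_range_succ', pow_zero, pow_one, mul_comm, atPartialProd,
    map_prod]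
  congr 1
  refine Finset.prod_congr rfl fun i _ => ?_
  rw [map_sub, map_one, map_mul, map_C, map_X, hφ, ← pow_mul, ← pow_succ]

/-- **The Anderson–Thakur function.**  Over `K = ℂ_∞` with `‖θ‖ = q > 1` and
`λ_θ^{q-1} = -θ`, the product `∏_{i ≥ 0}(1 - t θ^{-qⁱ})` converges in the Tate algebra
(in Gauss norm) to a restricted power series `P`, and
`ω = λ_θ · P⁻¹` satisfies the `τ`-difference equation `τ(ω) = (t - θ)·ω`, where `τ`
acts by the `q`-power Frobenius `φ` on coefficients. -/
theorem anderson_thakur_function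
    [CompleteSpace K] (hna : ∀ x y : K, ‖x + y‖ ≤ max ‖x‖ ‖y‖)
    (q : ℕ) (hq : 1 < q) (θ lam : K) (hθ : ‖θ‖ = (q : ℝ))
    (hlam : lam ^ (q - 1) = -θ)
    (φ : K →+* K) (hφ : ∀ x, φ x = x ^ q) :
    ∃ P : PowerSeries K,
      Tendsto (fun N => gaussNorm (atPartialProd θ q N - P)) atTop (nhds 0) ∧
      IsRestricted P ∧
      IsRestricted (PowerSeries.C lam * P⁻¹) ∧
      PowerSeries.map φ (PowerSeries.C lam * P⁻¹) =
        (PowerSeries.X - PowerSeries.C θ) * (PowerSeries.C lam * P⁻¹) := by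
  have : IsUltrametricDist K :=
    IsUltrametricDist.isUltrametricDist_of_forall_norm_add_le_max_norm hna
  have hr0 : (0 : ℝ) ≤ (q : ℝ)⁻¹ := by positivity
  have hr1 : (q : ℝ)⁻¹ < 1 := inv_lt_one_of_one_lt₀ (by exact_mod_cast hq)
  have hθ0 : θ ≠ 0 := norm_ne_zero_iff.mp (by rw [hθ]; positivity)
  have ha (i : ℕ) : ‖θ⁻¹ ^ q ^ i‖ ≤ (q : ℝ)⁻¹ ^ (i + 1) := by
    rw [norm_pow, norm_inv, hθ]
    exact pow_le_pow_of_le_one hr0 hr1.le (Nat.lt_pow_self hq)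
  obtain ⟨P, hlim, hconv, hP0, hP⟩ := exists_tendsto_prod_one_sub_C_mul_X hr0 hr1 ha
  have hfe : P = (1 - C θ⁻¹ * X) * PowerSeries.map φ P :=
    eq_mul_map_of_tendsto ((continuous_pow q).congr fun x => (hφ x).symm) hlim
      (atPartialProd_succ hφ θ)
  have hlam' : φ lam = -θ * lam := by rw [hφ, ← hlam, ← pow_succ, Nat.sub_add_cancel hq.le]
  refine ⟨P, tendsto_gaussNorm_of_norm_coeff_le ?_ hconv,
    isRestricted_of_norm_coeff_le_pow hr0 hr1 hP,
    (isRestricted_of_norm_coeff_le_pow hr0 hr1 (norm_coeff_inv_le_pow hr0 hP0 hP)).C_mul lam,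
    map_C_mul_inv_eq_of_eq_mul_map hθ0 hlam' hfe⟩
  exact (tendsto_pow_atTop_nhds_zero_of_lt_one hr0 hr1).comp (tendsto_add_atTop_nat 1)

end
end

section
/- Let Λ ⊂ C_∞ be a finitely generated (hence free) A-submodule that is discrete (every bounded subset of C_∞ meets Λ in a finite set), where A = F_q[θ]. Then the product e_Λ(w) = w ∏_{0≠λ∈Λ} (1 − w/λ) converges for every w ∈ C_∞, defining an F_q-linear, surjective function e_Λ: C_∞ → C_∞ with kernel exactly Λ. -/
/-!
For `r > 0` the points of `Λ` of norm `≤ r` form a finite additive group `V`, and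
`e_V(w) = w ∏_{0 ≠ v ∈ V} (1 - w/v)` is a nonzero multiple of `f(w) = ∏_{v ∈ V} (w - v)`. This `f`
is additive, because `f(X + x) - f(X) - f(x)` vanishes on `V` and has degree `< |V|`; letting
`r → ∞` makes `e_Λ` additive, and reindexing `λ ↦ cλ` makes it `𝔽_q`-linear.

For `r ≥ 2‖w‖` all remaining factors are within `1/2` of `1`, so
`‖e_Λ(w) - e_V(w)‖ ≤ ‖e_V(w)‖ / 2`. This pins down the kernel, and it turns exact preimages under
`e_V` into approximate ones under `e_Λ`: since `K` is algebraically closed, `e_V(w) = z` has a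
solution, and one of least norm in its coset `w + V` satisfies `‖w‖ ≤ ‖z‖`. Successive
approximation in the complete field `K` then makes `e_Λ` surjective.
-/

open Filter Finset Polynomial Topology Lagrange
open scoped NNReal

section

variable {K ι : Type*} [NormedField K] [IsUltrametricDist K] {f : ι → K} {ε : ℝ}

lemma norm_le_one_of_norm_sub_one_le_one {x : K} (h : ‖x - 1‖ ≤ 1) : ‖x‖ ≤ 1 := by
  simpa using (IsUltrametricDist.norm_add_le_max (x - 1) 1).trans (max_le h norm_one.le)

lemma Finset.norm_prod_sub_one_le (s : Finset ι) (hε0 : 0 ≤ ε) (hε1 : ε ≤ 1)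
    (h : ∀ i ∈ s, ‖f i - 1‖ ≤ ε) : ‖∏ i ∈ s, f i - 1‖ ≤ ε := by
  classical
  induction s using Finset.induction_on with
  | empty => simpa using hε0
  | insert a s ha ih =>
    have hs := ih fun i hi => h i (mem_insert_of_mem hi)
    rw [prod_insert ha, show f a * ∏ i ∈ s, f i - 1 = (f a - 1) * ∏ i ∈ s, f i + (∏ i ∈ s, f i - 1)
      by ring]
    refine (IsUltrametricDist.norm_add_le_max _ _).trans <| max_le ?_ hs
    rw [norm_mul]
    exact (mul_le_mul (h a (mem_insert_self a s)) (norm_le_one_of_norm_sub_one_le_one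
      (hs.trans hε1)) (norm_nonneg _) hε0).trans_eq (mul_one ε)

lemma Finset.norm_prod_sub_prod_le [DecidableEq ι] {s t : Finset ι} (hts : t ⊆ s) (hε0 : 0 ≤ ε)
    (hε1 : ε ≤ 1) (h : ∀ i ∈ s \ t, ‖f i - 1‖ ≤ ε) :
    ‖∏ i ∈ s, f i - ∏ i ∈ t, f i‖ ≤ ‖∏ i ∈ t, f i‖ * ε := by
  rw [← prod_sdiff hts, ← sub_one_mul, norm_mul, mul_comm]
  exact mul_le_mul_of_nonneg_left (norm_prod_sub_one_le _ hε0 hε1 h) (norm_nonneg _)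

lemma HasProd.norm_sub_prod_le {a : K} (hf : HasProd f a) (t : Finset ι) (hε0 : 0 ≤ ε)
    (hε1 : ε ≤ 1) (h : ∀ i ∉ t, ‖f i - 1‖ ≤ ε) :
    ‖a - ∏ i ∈ t, f i‖ ≤ ‖∏ i ∈ t, f i‖ * ε := by
  classical
  exact le_of_tendsto (hf.sub_const _).norm <| (eventually_ge_atTop t).mono fun _ hts =>
    norm_prod_sub_prod_le hts hε0 hε1 fun i hi => h i (Finset.mem_sdiff.1 hi).2

lemma multipliable_of_tendsto_cofinite_one [CompleteSpace K] (hf : Tendsto f cofinite (𝓝 1)) :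
    Multipliable f := by
  classical
  have hfin : ∀ δ > 0, {i | δ ≤ ‖f i - 1‖}.Finite := fun δ hδ => by
    simpa [dist_eq_norm] using eventually_cofinite.1 (Metric.tendsto_nhds.1 hf δ hδ)
  set t₀ := (hfin 1 one_pos).toFinset
  set C := ‖∏ i ∈ t₀, f i‖
  refine cauchySeq_tendsto_of_complete <| Metric.cauchySeq_iff'.2 fun ε hε => ?_
  set δ := min 1 (ε / (C + 1))
  have hδ : 0 < δ := lt_min one_pos (by positivity)
  set t := t₀ ∪ (hfin δ hδ).toFinset
  have hC : ‖∏ i ∈ t, f i‖ ≤ C := by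
    have h := norm_prod_sub_prod_le (f := f) (subset_union_left : t₀ ⊆ t) zero_le_one le_rfl
      fun i hi => (not_le.1 fun hle => (Finset.mem_sdiff.1 hi).2 <|
        (hfin 1 one_pos).mem_toFinset.2 hle).le
    rw [mul_one] at h
    calc ‖∏ i ∈ t, f i‖ = ‖(∏ i ∈ t, f i - ∏ i ∈ t₀, f i) + ∏ i ∈ t₀, f i‖ := by
          rw [sub_add_cancel]
      _ ≤ C := (IsUltrametricDist.norm_add_le_max _ _).trans (max_le h le_rfl)
  refine ⟨t, fun s hs => ?_⟩
  rw [dist_eq_norm]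
  have hst : ‖∏ i ∈ s, f i - ∏ i ∈ t, f i‖ ≤ ‖∏ i ∈ t, f i‖ * δ :=
    norm_prod_sub_prod_le hs hδ.le (min_le_left _ _) fun i hi =>
      (not_le.1 fun hle => (Finset.mem_sdiff.1 hi).2 <|
        mem_union_right _ <| (hfin δ hδ).mem_toFinset.2 hle).le
  calc ‖∏ i ∈ s, f i - ∏ i ∈ t, f i‖ ≤ ‖∏ i ∈ t, f i‖ * δ := hst
    _ ≤ C * (ε / (C + 1)) := by gcongr; exact min_le_right _ _
    _ < ε := by
      rw [mul_div_assoc', div_lt_iff₀ (by positivity)]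
      nlinarith [norm_nonneg (∏ i ∈ t₀, f i)]

end

section

variable {R : Type*} [CommRing R] {H : AddSubgroup R} {V : Finset R}

lemma eval_nodal_add_of_mem (hV : ∀ x, x ∈ V ↔ x ∈ H) (x : R) {g : R} (hg : g ∈ H) :
    (nodal V id).eval (x + g) = (nodal V id).eval x := by
  simp only [eval_nodal, id]
  exact prod_equiv (Equiv.subRight g)
    (fun v => by simp [hV, sub_eq_add_neg, H.add_mem_cancel_right (H.neg_mem hg)])
    (fun v _ => by simp only [Equiv.subRight_apply]; ring)

theorem eval_nodal_add [IsDomain R] (hV : ∀ x, x ∈ V ↔ x ∈ H) (x y : R) :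
    (nodal V id).eval (x + y) = (nodal V id).eval x + (nodal V id).eval y := by
  set f := nodal V id
  have hf : IsMonicOfDegree f #V := ⟨natDegree_nodal, nodal_monic⟩
  have hV0 : #V ≠ 0 := card_ne_zero.2 ⟨0, (hV 0).2 H.zero_mem⟩
  have hq : f.comp (X + C x) - (C (f.eval x) + f) = 0 := by
    refine eq_zero_of_natDegree_lt_card_of_eval_eq_zero' _ V (fun v hv => ?_) ?_
    · have hfv : f.eval v = 0 := eval_nodal_at_node (v := id) hv
      simp only [eval_sub, eval_comp, eval_add, eval_X, eval_C, add_comm v, hfv,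
        f, eval_nodal_add_of_mem hV x ((hV v).1 hv)]
      ring
    · refine ((mul_one #V) ▸ hf.comp one_ne_zero (isMonicOfDegree_X_add_one x)).natDegree_sub_lt
        hV0 (hf.add_left ?_)
      simpa using Nat.pos_of_ne_zero hV0
  simpa [add_comm y, sub_eq_zero, add_comm (f.eval x)] using congrArg (eval y) hq

end

section

variable {K : Type*} [Field K] {H : AddSubgroup K} {V : Finset K}

-- The factor of `0 ∈ V` is `1 - w * 0⁻¹ = 1`, so `∏ v ∈ V` is the product over `V \ {0}`.
lemma mul_prod_one_sub_mul_inv_eq [DecidableEq K] (h0 : (0 : K) ∈ V) (w : K) :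
    w * ∏ v ∈ V, (1 - w * v⁻¹) = (∏ v ∈ V.erase 0, -v⁻¹) * (nodal V id).eval w := by
  rw [eval_nodal, ← mul_prod_erase V _ h0, ← mul_prod_erase V (fun v => w - id v) h0]
  simp only [inv_zero, mul_zero, sub_zero, one_mul, id]
  rw [mul_left_comm, ← prod_mul_distrib]
  congr 1
  refine prod_congr rfl fun v hv => ?_
  field_simp [ne_of_mem_erase hv]
  ring

theorem mul_prod_one_sub_mul_inv_add (hV : ∀ x, x ∈ V ↔ x ∈ H) (x y : K) :
    (x + y) * ∏ v ∈ V, (1 - (x + y) * v⁻¹) =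
      x * ∏ v ∈ V, (1 - x * v⁻¹) + y * ∏ v ∈ V, (1 - y * v⁻¹) := by
  classical
  simp only [mul_prod_one_sub_mul_inv_eq ((hV 0).2 H.zero_mem), eval_nodal_add hV, mul_add]

end

section

variable {K : Type*} [NormedField K] [IsUltrametricDist K] {V : Finset K}

lemma one_le_norm_one_sub_mul_inv {w v : K} (h : ‖w‖ ≤ ‖w - v‖) : 1 ≤ ‖1 - w * v⁻¹‖ := by
  rcases eq_or_ne v 0 with rfl | hv
  · simp
  rw [norm_sub_rev] at h
  have hv_le : ‖v‖ ≤ ‖v - w‖ := by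
    simpa using (IsUltrametricDist.norm_add_le_max (v - w) w).trans (max_le le_rfl h)
  rwa [show 1 - w * v⁻¹ = (v - w) / v by field_simp, norm_div, one_le_div (norm_pos_iff.2 hv)]

lemma norm_le_norm_mul_prod_one_sub_mul_inv {w : K} (h : ∀ v ∈ V, ‖w‖ ≤ ‖w - v‖) :
    ‖w‖ ≤ ‖w * ∏ v ∈ V, (1 - w * v⁻¹)‖ := by
  rw [norm_mul, norm_prod]
  exact le_mul_of_one_le_right (norm_nonneg w)
    (one_le_prod fun v hv => one_le_norm_one_sub_mul_inv (h v hv))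

theorem exists_norm_le_mul_prod_one_sub_mul_inv_eq [IsAlgClosed K] {H : AddSubgroup K}
    (hV : ∀ x, x ∈ V ↔ x ∈ H) (z : K) :
    ∃ w, ‖w‖ ≤ ‖z‖ ∧ w * ∏ v ∈ V, (1 - w * v⁻¹) = z := by
  classical
  have h0 : (0 : K) ∈ V := (hV 0).2 H.zero_mem
  have hV0 : 0 < #V := card_pos.2 ⟨0, h0⟩
  set c := ∏ v ∈ V.erase 0, -v⁻¹
  have hc : c ≠ 0 := prod_ne_zero_iff.2 fun v hv => by simpa using ne_of_mem_erase hv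
  have hf : IsMonicOfDegree (nodal V id - C (z / c)) #V :=
    IsMonicOfDegree.sub ⟨natDegree_nodal, nodal_monic⟩ (by simpa using hV0)
  obtain ⟨b, hb⟩ := IsAlgClosed.exists_root _ <| by
    rw [degree_eq_natDegree hf.ne_zero, hf.natDegree_eq]
    exact_mod_cast hV0.ne'
  obtain ⟨g, hg, hmin⟩ := exists_min_image V (fun v => ‖b + v‖) ⟨0, h0⟩
  have hE : (b + g) * ∏ v ∈ V, (1 - (b + g) * v⁻¹) = z := by
    have hfb : (nodal V id).eval b = z / c := by simpa [sub_eq_zero] using hb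
    rw [mul_prod_one_sub_mul_inv_eq h0, eval_nodal_add_of_mem hV b ((hV g).1 hg), hfb,
      mul_div_cancel₀ _ hc]
  refine ⟨b + g, ?_, hE⟩
  refine (norm_le_norm_mul_prod_one_sub_mul_inv fun v hv => ?_).trans_eq (congrArg norm hE)
  rw [add_sub_assoc]
  exact hmin _ ((hV _).2 (H.sub_mem ((hV g).1 hg) ((hV v).1 hv)))

end

theorem AddMonoidHom.surjective_of_exists_approx {E F : Type*} [SeminormedAddCommGroup E]
    [CompleteSpace E] [NormedAddCommGroup F] (f : E →+ F) (hf : Continuous f) {C : ℝ≥0}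
    (h : ∀ z, ∃ w, ‖w‖ ≤ C * ‖z‖ ∧ ‖z - f w‖ ≤ ‖z‖ / 2) : Function.Surjective f := by
  intro z
  choose g hg_norm hg_approx using h
  set u : ℕ → F := fun n => (fun y => y - f (g y))^[n] z
  have hu_succ (n : ℕ) : u (n + 1) = u n - f (g (u n)) := Function.iterate_succ_apply' _ _ _
  have hu_norm (n : ℕ) : ‖u n‖ ≤ ‖z‖ * (1 / 2) ^ n := by
    induction n with
    | zero => simp [u]
    | succ n ih =>
      rw [hu_succ, pow_succ, ← mul_assoc]
      linarith [hg_approx (u n)]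
  have hsum : Summable fun n => g (u n) :=
    .of_norm_bounded (summable_geometric_two.mul_left (C * ‖z‖)) fun n =>
      (hg_norm _).trans <| by rw [mul_assoc]; gcongr; exact hu_norm n
  have hu_lim : Tendsto u atTop (𝓝 0) :=
    squeeze_zero_norm hu_norm <| by
      simpa using (tendsto_pow_atTop_nhds_zero_of_lt_one (r := (1 / 2 : ℝ)) (by norm_num)
        (by norm_num)).const_mul ‖z‖
  have hpartial : Tendsto (fun n => ∑ k ∈ Finset.range n, f (g (u k))) atTop (𝓝 z) := by
    have htele (n : ℕ) : ∑ k ∈ Finset.range n, f (g (u k)) = z - u n := by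
      simp_rw [show ∀ k, f (g (u k)) = u k - u (k + 1) by intro k; rw [hu_succ]; abel]
      exact sum_range_sub' u n
    simpa [htele] using tendsto_const_nhds.sub hu_lim
  refine ⟨∑' n, g (u n), ?_⟩
  rw [hsum.map_tsum f hf]
  exact tendsto_nhds_unique (hsum.map f hf).hasSum.tendsto_sum_nat hpartial

def AddSubgroup.IsLocallyFinite {E : Type*} [SeminormedAddGroup E] (Γ : AddSubgroup E) : Prop :=
  ∀ r : ℝ, {x | x ∈ Γ ∧ ‖x‖ ≤ r}.Finite

section LatticeExp

variable {K : Type*} [NormedField K]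

noncomputable def latticeExp (Γ : AddSubgroup K) (w : K) : K :=
  w * ∏' l : {x : K // x ∈ Γ ∧ x ≠ 0}, (1 - w * (l : K)⁻¹)

@[simp]
lemma latticeExp_zero (Γ : AddSubgroup K) : latticeExp Γ 0 = 0 :=
  zero_mul _

lemma latticeExp_mul_of_mem_iff (Γ : AddSubgroup K) {c : K} (hc : c ≠ 0)
    (hcΓ : ∀ x, c * x ∈ Γ ↔ x ∈ Γ) (w : K) : latticeExp Γ (c * w) = c * latticeExp Γ w := by
  let σ : {x : K // x ∈ Γ ∧ x ≠ 0} ≃ {x : K // x ∈ Γ ∧ x ≠ 0} :=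
    { toFun l := ⟨c⁻¹ * l, (hcΓ _).1 (by simpa [hc] using l.2.1), by simp [hc, l.2.2]⟩
      invFun l := ⟨c * l, (hcΓ l).2 l.2.1, mul_ne_zero hc l.2.2⟩
      left_inv l := by ext; simp [hc]
      right_inv l := by ext; simp [hc] }
  rw [latticeExp, latticeExp, ← σ.tprod_eq fun l => 1 - w * (l : K)⁻¹, mul_assoc]
  refine congrArg (fun P => c * (w * P)) (tprod_congr fun l => ?_)
  simp only [σ, Equiv.coe_fn_mk, mul_inv_rev, inv_inv]
  ring

variable {Γ : AddSubgroup K}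

lemma finite_setOf_norm_le (hΓ : Γ.IsLocallyFinite) (r : ℝ) :
    {l : {x : K // x ∈ Γ ∧ x ≠ 0} | ‖(l : K)‖ ≤ r}.Finite :=
  ((hΓ r).preimage Subtype.val_injective.injOn).subset fun l hl => ⟨l.2.1, hl⟩

lemma prod_toFinset_one_sub_mul_inv (hΓ : Γ.IsLocallyFinite) (r : ℝ) (w : K) :
    ∏ l ∈ (finite_setOf_norm_le hΓ r).toFinset, (1 - w * (l : K)⁻¹) =
      ∏ v ∈ (hΓ r).toFinset, (1 - w * v⁻¹) := by
  classical
  have : (finite_setOf_norm_le hΓ r).toFinset = (hΓ r).toFinset.subtype _ := by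
    ext l; simp [l.2.1]
  rw [this, prod_subtype_eq_prod_filter (fun v => 1 - w * v⁻¹)]
  exact prod_filter_of_ne fun v hv hne =>
    ⟨((hΓ r).mem_toFinset.1 hv).1, by rintro rfl; simp at hne⟩

lemma tendsto_one_sub_mul_inv_cofinite (hΓ : Γ.IsLocallyFinite) (w : K) :
    Tendsto (fun l : {x : K // x ∈ Γ ∧ x ≠ 0} => 1 - w * (l : K)⁻¹) cofinite (𝓝 1) := by
  have hcob : Tendsto (fun l : {x : K // x ∈ Γ ∧ x ≠ 0} => (l : K)) cofinite
      (Bornology.cobounded K) := by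
    rw [← tendsto_norm_atTop_iff_cobounded]
    exact tendsto_atTop.2 fun r => eventually_cofinite.2 <|
      (finite_setOf_norm_le hΓ r).subset fun l hl => (not_le.1 hl).le
  simpa using ((Filter.tendsto_inv₀_cobounded.comp hcob).const_mul w).const_sub 1

lemma exists_pos_forall_mem_norm_le_eq_zero (hΓ : Γ.IsLocallyFinite) :
    ∃ r > 0, ∀ x ∈ Γ, ‖x‖ ≤ r → x = 0 := by
  obtain ⟨ε, hε, hball⟩ :=
    Metric.isOpen_iff.1 ((hΓ 1).sdiff (t := {0})).isClosed.isOpen_compl 0 (by simp)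
  refine ⟨min (ε / 2) 1, by positivity, fun x hx hxr => by_contra fun hx0 => hball ?_
    ⟨⟨hx, hxr.trans (min_le_right _ _)⟩, hx0⟩⟩
  rw [mem_ball_zero_iff]
  linarith [min_le_left (ε / 2) 1]

variable [IsUltrametricDist K]

lemma mem_toFinset_iff_mem_inf_closedBall (hΓ : Γ.IsLocallyFinite) {r : ℝ} (hr : 0 < r)
    (x : K) : x ∈ (hΓ r).toFinset ↔
      x ∈ Γ ⊓ (IsUltrametricDist.closedBall_openAddSubgroup K hr).toAddSubgroup := by
  simp [IsUltrametricDist.closedBall_openAddSubgroup]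

variable [CompleteSpace K]

lemma multipliable_one_sub_mul_inv (hΓ : Γ.IsLocallyFinite) (w : K) :
    Multipliable fun l : {x : K // x ∈ Γ ∧ x ≠ 0} => 1 - w * (l : K)⁻¹ :=
  multipliable_of_tendsto_cofinite_one (tendsto_one_sub_mul_inv_cofinite hΓ w)

lemma norm_latticeExp_sub_le (hΓ : Γ.IsLocallyFinite) {r : ℝ} {w : K}
    (hr : 2 * ‖w‖ ≤ r) :
    ‖latticeExp Γ w - w * ∏ v ∈ (hΓ r).toFinset, (1 - w * v⁻¹)‖ ≤
      ‖w * ∏ v ∈ (hΓ r).toFinset, (1 - w * v⁻¹)‖ / 2 := by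
  have h := (multipliable_one_sub_mul_inv hΓ w).hasProd.norm_sub_prod_le
    (finite_setOf_norm_le hΓ r).toFinset (ε := 1 / 2) (by norm_num) (by norm_num) fun l hl => by
      have hl : r < ‖(l : K)‖ := by simpa using hl
      rw [sub_sub_cancel_left, norm_neg, norm_mul, norm_inv, ← div_eq_mul_inv,
        div_le_iff₀ (by linarith [norm_nonneg w])]
      linarith
  rw [prod_toFinset_one_sub_mul_inv hΓ r w] at h
  rw [latticeExp, ← mul_sub, norm_mul, norm_mul, mul_div_assoc]
  exact mul_le_mul_of_nonneg_left (by linarith) (norm_nonneg w)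

theorem latticeExp_add (hΓ : Γ.IsLocallyFinite) (x y : K) :
    latticeExp Γ (x + y) = latticeExp Γ x + latticeExp Γ y := by
  set t : ℕ → Finset {x : K // x ∈ Γ ∧ x ≠ 0} := fun n =>
    (finite_setOf_norm_le hΓ (n + 1)).toFinset
  have ht : Tendsto t atTop atTop := by
    refine tendsto_atTop_finset_of_monotone (fun m n hmn l hl => ?_) fun l => ?_
    · simp only [t, Set.Finite.mem_toFinset, Set.mem_ofPred_eq] at hl ⊢
      exact hl.trans (by simpa using hmn)
    · obtain ⟨n, hn⟩ := exists_nat_ge ‖(l : K)‖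
      exact ⟨n, by simpa [t] using hn.trans (le_add_of_nonneg_right zero_le_one)⟩
  have hpartial (w : K) : Tendsto (fun n : ℕ => w * ∏ v ∈ (hΓ (n + 1)).toFinset, (1 - w * v⁻¹))
      atTop (𝓝 (latticeExp Γ w)) := by
    have h := ((multipliable_one_sub_mul_inv hΓ w).hasProd.comp ht).const_mul w
    simp only [Function.comp_def, t, prod_toFinset_one_sub_mul_inv hΓ] at h
    exact h
  refine tendsto_nhds_unique (hpartial (x + y)) ?_
  simp_rw [mul_prod_one_sub_mul_inv_add
    (mem_toFinset_iff_mem_inf_closedBall hΓ (Nat.cast_add_one_pos _))]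
  exact (hpartial x).add (hpartial y)

theorem latticeExp_eq_zero_iff (hΓ : Γ.IsLocallyFinite) {x : K} :
    latticeExp Γ x = 0 ↔ x ∈ Γ := by
  refine ⟨fun hx => by_contra fun hxΓ => ?_, fun hx => ?_⟩
  · have hx0 : x ≠ 0 := by rintro rfl; exact hxΓ Γ.zero_mem
    have hE : x * ∏ v ∈ (hΓ (2 * ‖x‖)).toFinset, (1 - x * v⁻¹) ≠ 0 := by
      refine mul_ne_zero hx0 (prod_ne_zero_iff.2 fun v hv h => hxΓ ?_)
      have hv0 : v ≠ 0 := by rintro rfl; simp at h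
      rw [sub_eq_zero, eq_comm, mul_inv_eq_one₀ hv0] at h
      exact h ▸ ((hΓ _).mem_toFinset.1 hv).1
    have h := norm_latticeExp_sub_le hΓ (le_refl (2 * ‖x‖))
    rw [hx, zero_sub, norm_neg] at h
    linarith [norm_pos_iff.2 hE]
  · rcases eq_or_ne x 0 with rfl | hx0
    · exact latticeExp_zero Γ
    · rw [latticeExp, tprod_of_exists_eq_zero ⟨⟨x, hx, hx0⟩, by simp [hx0]⟩, mul_zero]

theorem continuous_latticeExp (hΓ : Γ.IsLocallyFinite) :
    Continuous (latticeExp Γ) := by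
  obtain ⟨r, hr, hΓr⟩ := exists_pos_forall_mem_norm_le_eq_zero hΓ
  have hsmall : ∀ᶠ w in 𝓝 (0 : K), ‖latticeExp Γ w‖ ≤ 2 * ‖w‖ := by
    filter_upwards [Metric.closedBall_mem_nhds (0 : K) (half_pos hr)] with w hw
    rw [mem_closedBall_zero_iff] at hw
    have h := norm_latticeExp_sub_le hΓ (r := r) (w := w) (by linarith)
    rw [prod_eq_one fun v hv => by simp [hΓr v ((hΓ r).mem_toFinset.1 hv).1
      ((hΓ r).mem_toFinset.1 hv).2], mul_one] at h
    linarith [norm_sub_norm_le (latticeExp Γ w) w, norm_nonneg w]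
  refine continuous_of_continuousAt_zero (AddMonoidHom.mk' _ (latticeExp_add hΓ)) ?_
  simpa [ContinuousAt] using
    squeeze_zero_norm' hsmall (by simpa using tendsto_norm_zero.const_mul 2)

theorem exists_norm_le_norm_sub_latticeExp_le [IsAlgClosed K]
    (hΓ : Γ.IsLocallyFinite) (z : K) :
    ∃ w, ‖w‖ ≤ ‖z‖ ∧ ‖z - latticeExp Γ w‖ ≤ ‖z‖ / 2 := by
  rcases eq_or_ne z 0 with rfl | hz
  · exact ⟨0, by simp⟩
  obtain ⟨w, hw, hE⟩ := exists_norm_le_mul_prod_one_sub_mul_inv_eq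
    (mem_toFinset_iff_mem_inf_closedBall hΓ (by positivity : 0 < 2 * ‖z‖)) z
  have h := norm_latticeExp_sub_le hΓ (r := 2 * ‖z‖) (w := w) (by linarith)
  rw [hE, norm_sub_rev] at h
  exact ⟨w, hw, h⟩

theorem latticeExp_surjective [IsAlgClosed K] (hΓ : Γ.IsLocallyFinite) :
    Function.Surjective (latticeExp Γ) :=
  (AddMonoidHom.mk' _ (latticeExp_add hΓ)).surjective_of_exists_approx
    (continuous_latticeExp hΓ) (C := 1) fun z => by
      simpa using exists_norm_le_norm_sub_latticeExp_le hΓ z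

end LatticeExp

theorem lattice_exponential_exists_general
    {Fq K : Type*} [Field Fq] [NontriviallyNormedField K]
    [CompleteSpace K] [IsAlgClosed K]
    (hna : ∀ x y : K, ‖x + y‖ ≤ max ‖x‖ ‖y‖)
    [Algebra Fq K] [Algebra (Polynomial Fq) K] [IsScalarTower Fq (Polynomial Fq) K]
    (Λ : Submodule (Polynomial Fq) K)
    (hdisc : ∀ M : ℝ, {x : K | x ∈ Λ ∧ ‖x‖ ≤ M}.Finite) :
    ∃ e P : K → K,
      (∀ w, e w = w * P w) ∧
      (∀ w, HasProd (fun l : {x : K // x ∈ Λ ∧ x ≠ 0} => 1 - w * (l : K)⁻¹) (P w)) ∧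
      (∀ x y, e (x + y) = e x + e y) ∧
      (∀ (c : Fq) (x : K), e (algebraMap Fq K c * x) = algebraMap Fq K c * e x) ∧
      Function.Surjective e ∧
      (∀ x, e x = 0 ↔ x ∈ Λ) := by
  have : IsUltrametricDist K :=
    IsUltrametricDist.isUltrametricDist_of_forall_norm_add_le_max_norm hna
  have hΓ : Λ.toAddSubgroup.IsLocallyFinite := hdisc
  refine ⟨latticeExp Λ.toAddSubgroup, fun w => ∏' l : {x : K // x ∈ Λ ∧ x ≠ 0}, (1 - w * (l : K)⁻¹),
    fun w => rfl, fun w => (multipliable_one_sub_mul_inv hΓ w).hasProd, latticeExp_add hΓ,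
    fun c x => ?_, latticeExp_surjective hΓ, fun x => latticeExp_eq_zero_iff hΓ⟩
  rcases eq_or_ne c 0 with rfl | hc
  · simp
  refine latticeExp_mul_of_mem_iff _ (by simpa using hc) (fun y => ?_) x
  rw [← Algebra.smul_def]
  exact (Λ.restrictScalars Fq).smul_mem_iff hc

/-- **The lattice exponential function.** Let `K` model `ℂ_∞` (complete, algebraically
closed, nonarchimedean) and let `Λ ⊆ K` be a finitely generated `A = 𝔽_q[θ]`-submodule
(the `A`-action coming from an algebra structure `𝔽_q[θ] → K`) that is discrete: every
bounded set meets `Λ` in a finite set.  Then the product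
`e_Λ(w) = w ∏_{0 ≠ λ ∈ Λ} (1 - w/λ)` converges for every `w`, and defines an
`𝔽_q`-linear surjective function `e_Λ : K → K` with kernel exactly `Λ`. -/
theorem lattice_exponential_exists
    {Fq K : Type*} [Field Fq] [Fintype Fq] [NontriviallyNormedField K]
    [CompleteSpace K] [IsAlgClosed K]
    (hna : ∀ x y : K, ‖x + y‖ ≤ max ‖x‖ ‖y‖)
    [Algebra Fq K] [Algebra (Polynomial Fq) K] [IsScalarTower Fq (Polynomial Fq) K]
    (Λ : Submodule (Polynomial Fq) K) (hfg : Λ.FG)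
    (hdisc : ∀ M : ℝ, {x : K | x ∈ Λ ∧ ‖x‖ ≤ M}.Finite) :
    ∃ e P : K → K,
      (∀ w, e w = w * P w) ∧
      (∀ w, HasProd (fun l : {x : K // x ∈ Λ ∧ x ≠ 0} => 1 - w * (l : K)⁻¹) (P w)) ∧
      (∀ x y, e (x + y) = e x + e y) ∧
      (∀ (c : Fq) (x : K), e (algebraMap Fq K c * x) = algebraMap Fq K c * e x) ∧
      Function.Surjective e ∧
      (∀ x, e x = 0 ↔ x ∈ Λ) :=
  lattice_exponential_exists_general hna Λ hdisc
end

section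
/- Let z ∈ Ω^r ⊂ C_∞^r with z_1 = 1, and suppose |z|_ℑ ≥ q^{−n}|z| for some n ≥ 0, where |z| = max_i |z_i| and |z|_ℑ = inf_H |ℓ_H(z)| over normalized K_∞-rational hyperplane forms ℓ_H. Then for every nonzero a ∈ A^r, |z·a| ≥ q^{−n}·|a|, where |a| = max_i |a_i|. Consequently, for any k ≥ 1, the series Σ'_{a ∈ A^r} (z·a)^{−k} (sum over nonzero a) converges in C_∞. -/
/-!
Dividing `a` by a coordinate of largest absolute value turns `ι ∘ a` into a normalized
`K_∞`-rational form, so the hypothesis on `|z|_ℑ`, together with `|z| ≥ |z₁| = 1`, gives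
`|z·a| ≥ q^{-n} |a|`. Since there are only finitely many polynomials of bounded degree, `|z·a| → ∞`
along the cofinite filter, and in a complete ultrametric field a family tending to `0` is summable.
-/

open Filter Polynomial

theorem Polynomial.finite_setOf_natDegree_le (R : Type*) [Semiring R] [Finite R] (D : ℕ) :
    {p : R[X] | p.natDegree ≤ D}.Finite :=
  have : Finite (degreeLT R (D + 1)) := .of_equiv _ (degreeLTEquiv R (D + 1)).toEquiv.symm
  (degreeLT R (D + 1) : Set R[X]).toFinite.subset fun _ hp =>
    mem_degreeLT.2 <| (degree_le_of_natDegree_le hp).trans_lt <| by exact_mod_cast D.lt_succ_self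

theorem Polynomial.tendsto_cofinite_atTop_of_eq_pow_natDegree {R : Type*} [Semiring R] [Finite R]
    {v : R[X] → ℝ} {q : ℝ} (hq : 1 < q) (hv : ∀ p, p ≠ 0 → v p = q ^ p.natDegree) :
    Tendsto v cofinite atTop := by
  refine tendsto_atTop.2 fun C => eventually_cofinite.2 ?_
  obtain ⟨D, hD⟩ := pow_unbounded_of_one_lt C hq
  refine (finite_setOf_natDegree_le R D).subset fun p hp => ?_
  rcases eq_or_ne p 0 with rfl | hp0
  · simp
  · have : q ^ p.natDegree < q ^ D := (hv p hp0 ▸ not_le.1 hp).trans hD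
    exact ((pow_lt_pow_iff_right₀ hq).1 this).le

theorem tendsto_iSup_comp_cofinite_atTop {α ι : Type*} [Finite ι] {g : α → ℝ}
    (hg : Tendsto g cofinite atTop) : Tendsto (fun a : ι → α => ⨆ i, g (a i)) cofinite atTop := by
  refine tendsto_atTop.2 fun C => eventually_cofinite.2 ?_
  refine (Set.Finite.pi (t := fun _ => {x | ¬C ≤ g x}) fun _ =>
    eventually_cofinite.1 (tendsto_atTop.1 hg C)).subset fun a ha i _ => ?_
  exact fun hi => ha (hi.trans (le_ciSup (Finite.bddAbove_range fun i => g (a i)) i))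

theorem summable_inv_pow_of_tendsto_norm_atTop {α K : Type*} [NormedField K] [CompleteSpace K]
    [IsUltrametricDist K] {f : α → K} (hf : Tendsto (‖f ·‖) cofinite atTop) {k : ℕ} (hk : k ≠ 0) :
    Summable fun a => (f a ^ k)⁻¹ := by
  refine NonarchimedeanAddGroup.summable_of_tendsto_cofinite_zero ?_
  refine tendsto_zero_iff_norm_tendsto_zero.2 ?_
  simpa only [norm_inv, norm_pow, Function.comp_def] using
    tendsto_inv_atTop_zero.comp ((tendsto_pow_atTop hk).comp hf)

theorem mul_iSup_norm_le_norm_sum_mul {K ι : Type*} [NormedField K] [Fintype ι]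
    {F : Subfield K} {z : ι → K} {c : ℝ}
    (h : ∀ η : ι → F, (∀ i, ‖(η i : K)‖ ≤ 1) → (∃ j, ‖(η j : K)‖ = 1) → c ≤ ‖∑ i, z i * η i‖)
    {w : ι → K} (hwF : ∀ i, w i ∈ F) (hw : w ≠ 0) :
    c * ⨆ i, ‖w i‖ ≤ ‖∑ i, z i * w i‖ := by
  obtain ⟨i₀, hi₀⟩ := Function.ne_iff.1 hw
  have : Nonempty ι := ⟨i₀⟩
  obtain ⟨j, hj⟩ := Finite.exists_max fun i => ‖w i‖
  have hwj : 0 < ‖w j‖ := (norm_pos_iff.2 hi₀).trans_le (hj i₀)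
  have hsup : ⨆ i, ‖w i‖ = ‖w j‖ :=
    le_antisymm (ciSup_le hj) (le_ciSup (Finite.bddAbove_range fun i => ‖w i‖) j)
  let η : ι → F := fun i => ⟨w i * (w j)⁻¹, F.mul_mem (hwF i) (F.inv_mem (hwF j))⟩
  have hη : ∀ i, ‖(η i : K)‖ = ‖w i‖ / ‖w j‖ := fun i => by simp [η, div_eq_mul_inv]
  have key :=
    h η (fun i => by rw [hη, div_le_one hwj]; exact hj i) ⟨j, by rw [hη, div_self hwj.ne']⟩
  have hsum : ∑ i, z i * (η i : K) = (∑ i, z i * w i) * (w j)⁻¹ := by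
    simp only [η, Finset.sum_mul, mul_assoc]
  rwa [hsum, norm_mul, norm_inv, ← div_eq_mul_inv, le_div_iff₀ hwj, ← hsup] at key

/-- **Estimate on `|z·a|` on the affinoid `Ω_n` and convergence of Eisenstein sums.**
Let `F ⊆ K` be a subfield (modelling `K_∞ ⊆ ℂ_∞`) containing the image of
`A = 𝔽_q[θ]` under `ι`, with `‖ι(a)‖ = q^{deg a}` for `a ≠ 0`.  Suppose
`z = (z_r, …, z₁)`, `z₁ = 1`, satisfies `|z|_ℑ ≥ q^{-n}|z|`, i.e. every normalized
`K_∞`-rational hyperplane form `η` (all `‖η_i‖ ≤ 1`, some `‖η_j‖ = 1`) has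
`‖Σ z_i η_i‖ ≥ q^{-n} · max_i ‖z_i‖`.  Then `‖z·a‖ ≥ q^{-n} · max_i ‖a_i‖` for every
nonzero `a ∈ A^r`, and for every `k ≥ 1` the series `Σ'_{a ≠ 0} (z·a)^{-k}` converges. -/
theorem eisenstein_estimate_and_convergence
    {Fq K : Type*} [Field Fq] [Fintype Fq] [NontriviallyNormedField K] [CompleteSpace K]
    (hna : ∀ x y : K, ‖x + y‖ ≤ max ‖x‖ ‖y‖)
    (F : Subfield K) (ι : Polynomial Fq →+* K) (hrange : ∀ p : Polynomial Fq, ι p ∈ F)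
    (q : ℕ) (hq : 1 < q)
    (hdeg : ∀ p : Polynomial Fq, p ≠ 0 → ‖ι p‖ = (q : ℝ) ^ p.natDegree)
    {m nn : ℕ} (z : Fin (m + 1) → K) (hz1 : z (Fin.last m) = 1)
    (hIm : ∀ η : Fin (m + 1) → F, (∀ i, ‖(η i : K)‖ ≤ 1) → (∃ j, ‖(η j : K)‖ = 1) →
      (q : ℝ) ^ (-(nn : ℤ)) * (⨆ i, ‖z i‖) ≤ ‖∑ i, z i * (η i : K)‖) :
    (∀ a : Fin (m + 1) → Polynomial Fq, a ≠ 0 →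
      (q : ℝ) ^ (-(nn : ℤ)) * (⨆ i, ‖ι (a i)‖) ≤ ‖∑ i, z i * ι (a i)‖) ∧
    (∀ k : ℕ, 1 ≤ k →
      Summable (fun a : {a : Fin (m + 1) → Polynomial Fq // a ≠ 0} =>
        ((∑ i, z i * ι (a.1 i)) ^ k)⁻¹)) := by
  have hq1 : (1 : ℝ) < q := by exact_mod_cast hq
  have hz : 1 ≤ ⨆ i, ‖z i‖ := by
    simpa [hz1] using le_ciSup (Finite.bddAbove_range fun i => ‖z i‖) (Fin.last m)
  have estimate : ∀ a : Fin (m + 1) → Polynomial Fq, a ≠ 0 →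
      (q : ℝ) ^ (-(nn : ℤ)) * (⨆ i, ‖ι (a i)‖) ≤ ‖∑ i, z i * ι (a i)‖ := by
    intro a ha
    obtain ⟨i, hi⟩ := Function.ne_iff.1 ha
    have hιa : (fun i => ι (a i)) ≠ 0 := Function.ne_iff.2
      ⟨i, norm_pos_iff.1 <| hdeg _ hi ▸ pow_pos (zero_lt_one.trans hq1) _⟩
    calc (q : ℝ) ^ (-(nn : ℤ)) * (⨆ i, ‖ι (a i)‖)
        ≤ (q : ℝ) ^ (-(nn : ℤ)) * (⨆ i, ‖z i‖) * (⨆ i, ‖ι (a i)‖) := by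
          gcongr
          · exact Real.iSup_nonneg fun i => norm_nonneg _
          · exact le_mul_of_one_le_right (by positivity) hz
      _ ≤ ‖∑ i, z i * ι (a i)‖ := mul_iSup_norm_le_norm_sum_mul hIm (fun i => hrange _) hιa
  refine ⟨estimate, fun k hk => ?_⟩
  have : IsUltrametricDist K :=
    IsUltrametricDist.isUltrametricDist_of_forall_norm_add_le_max_norm hna
  refine summable_inv_pow_of_tendsto_norm_atTop ?_ (by omega)
  refine tendsto_atTop_mono (fun a => estimate a.1 a.2) (.const_mul_atTop (by positivity) ?_)
  exact (tendsto_iSup_comp_cofinite_atTop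
    (tendsto_cofinite_atTop_of_eq_pow_natDegree hq1 hdeg)).comp Subtype.val_injective.tendsto_cofinite
end
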